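/- Let p, q be primes with p < q, p > 3, p | σ(q²) and q | σ(p²). Then p ≡ 1 (mod 3) and q ≡ 1 (mod 3). -/

import Mathlib

/-! A prime `r ≠ 3` dividing `1 + m + m ^ 2` makes `m` a primitive cube root of unity modulo `r`,
so `3` divides the order `r - 1` of `(ZMod r)ˣ`. Both `p` and `q` exceed `3`. -/

theorem orderOf_eq_three_of_one_add_add_sq_eq_zero {R : Type*} [CommRing R] {x : R}
    (h3 : (3 : R) ≠ 0) (hx : 1 + x + x ^ 2 = 0) : orderOf x = 3 := by
  have hcube : x ^ 3 = 1 := by linear_combination (x - 1) * hx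
  have hne : x ≠ 1 := by
    rintro rfl
    exact h3 (by linear_combination hx)
  exact orderOf_eq_prime hcube hne

theorem Nat.Prime.mod_three_eq_one_of_dvd_one_add_add_sq {r m : ℕ} (hr : r.Prime) (hr3 : r ≠ 3)
    (h : r ∣ 1 + m + m ^ 2) : r % 3 = 1 := by
  have : Fact r.Prime := ⟨hr⟩
  have hroot : 1 + (m : ZMod r) + (m : ZMod r) ^ 2 = 0 := by
    exact_mod_cast (ZMod.natCast_eq_zero_iff _ _).2 h
  have h3 : (3 : ZMod r) ≠ 0 := by
    have := (ZMod.natCast_eq_zero_iff 3 r).not.2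
      fun hdvd => hr3 ((Nat.prime_dvd_prime_iff_eq hr Nat.prime_three).1 hdvd)
    exact_mod_cast this
  have hm : (m : ZMod r) ≠ 0 := by
    rintro hm
    simp [hm] at hroot
  have hdvd : 3 ∣ r - 1 := by
    rw [← orderOf_eq_three_of_one_add_add_sq_eq_zero h3 hroot]
    exact ZMod.orderOf_dvd_card_sub_one hm
  have := hr.two_le
  omega

theorem mutual_dvd_mod_three (p q : ℕ) (hp : p.Prime) (hq : q.Prime)
    (h3p : 3 < p) (hpq : p < q)
    (hpdvd : p ∣ 1 + q + q ^ 2) (hqdvd : q ∣ 1 + p + p ^ 2) :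
    p % 3 = 1 ∧ q % 3 = 1 :=
  ⟨hp.mod_three_eq_one_of_dvd_one_add_add_sq (by omega) hpdvd,
    hq.mod_three_eq_one_of_dvd_one_add_add_sq (by omega) hqdvd⟩
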